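/- arXiv:0902.0247 — 6 statements merged into one kernel-verified Lean document; each statement's English description precedes it below -/
import Mathlib

section
/- Let K be a field with a valuation v with value group Γ and residue field k of characteristic ≠ 2. Let t ∈ K with v(t) ∉ 2Γ. Let Q₁ = ⟨a₁,…,aₙ⟩ and Q₂ = ⟨b₁,…,b_m⟩ be diagonal quadratic forms over K with all aᵢ, bⱼ of valuation 0. If Q₁ ⊥ (⟨t⟩ ⊗ Q₂) is isotropic over K, then the residue form of Q₁ or of Q₂ is isotropic over k. -/
/-!
Let `A` and `B` be the largest valuations of the coordinates of an isotropic vector `(x, y)`, so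
that `v(Q₁(x)) ≤ A²` and `v(Q₂(y)) ≤ B²`, while `v(Q₁(x)) = v(t) · v(Q₂(y))`. Since `v t` is not a
square, `A² ≠ v(t) B²`. If `v(t) B² < A²`, then `v(Q₁(x)) < A²`, and rescaling `x` by the inverse
of a coordinate of valuation `A` gives an integral vector with a unit coordinate whose `Q₁`-value
lies in the maximal ideal; its residue is an isotropic vector of the residue form of `Q₁`.
Symmetrically for `Q₂` when `A² < v(t) B²`.
-/

open Finset

lemma eq_zero_of_sq_eq_mul_sq {Γ₀ : Type*} [LinearOrderedCommGroupWithZero Γ₀] {g A B : Γ₀}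
    (hg : ¬IsSquare g) (h : A ^ 2 = g * B ^ 2) : A = 0 ∧ B = 0 := by
  have hB : B = 0 := by
    by_contra hB
    refine hg ⟨A / B, ?_⟩
    rw [← sq, div_pow, h, mul_div_cancel_right₀ _ (pow_ne_zero 2 hB)]
  simpa [hB] using h

section ResidueForm

variable {K : Type*} [Field K] {Γ₀ : Type*} [LinearOrderedCommGroupWithZero Γ₀]
  (v : Valuation K Γ₀) {k : Type*} [Field k] {n : ℕ}

lemma valuation_sum_mul_sq_le_sup_sq (a : Fin n → v.integer) (x : Fin n → K) :
    v (∑ i, (a i : K) * x i ^ 2) ≤ (univ.sup fun i => v (x i)) ^ 2 :=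
  v.map_sum_le fun i hi => by
    rw [map_mul, map_pow]
    calc v (a i : K) * v (x i) ^ 2 ≤ 1 * v (x i) ^ 2 := by gcongr; exact (a i).2
      _ ≤ _ := by rw [one_mul]; gcongr; exact le_sup (f := fun i => v (x i)) hi

lemma exists_residue_isotropic_of_unit_coord (π : v.integer →+* k)
    (hker : ∀ x : v.integer, π x = 0 ↔ v (x : K) < 1) (a u : Fin n → v.integer) (i₀ : Fin n)
    (hu : v (u i₀ : K) = 1) (h : v (∑ i, (a i : K) * (u i : K) ^ 2) < 1) :
    ∃ z : Fin n → k, z ≠ 0 ∧ ∑ i, π (a i) * z i ^ 2 = 0 := by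
  refine ⟨fun i => π (u i), fun hz => ((hker (u i₀)).mp (congrFun hz i₀)).ne hu, ?_⟩
  simp only [← map_pow, ← map_mul, ← map_sum]
  rw [hker]
  push_cast
  exact h

lemma exists_residue_isotropic_of_valuation_lt_sup_sq (π : v.integer →+* k)
    (hker : ∀ x : v.integer, π x = 0 ↔ v (x : K) < 1) (a : Fin n → v.integer) (x : Fin n → K)
    (h : v (∑ i, (a i : K) * x i ^ 2) < (univ.sup fun i => v (x i)) ^ 2) :
    ∃ z : Fin n → k, z ≠ 0 ∧ ∑ i, π (a i) * z i ^ 2 = 0 := by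
  have hne : (univ : Finset (Fin n)).Nonempty := nonempty_of_ne_empty fun hn => by
    simp [hn, bot_eq_zero] at h
  obtain ⟨i₀, -, hi₀⟩ := exists_mem_eq_sup univ hne fun i => v (x i)
  rw [hi₀] at h
  have hx₀ : v (x i₀) ≠ 0 := fun h0 => by simp [h0] at h
  have hint : ∀ i, (x i₀)⁻¹ * x i ∈ v.integer := fun i => by
    rw [Valuation.mem_integer_iff, map_mul, map_inv₀, inv_mul_le_one₀ (zero_lt_iff.2 hx₀), ← hi₀]
    exact le_sup (f := fun i => v (x i)) (mem_univ i)
  refine exists_residue_isotropic_of_unit_coord v π hker a (fun i => ⟨_, hint i⟩) i₀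
    (by simp [(v.ne_zero_iff).1 hx₀]) ?_
  have hscale : ∑ i, (a i : K) * ((x i₀)⁻¹ * x i) ^ 2 =
      (x i₀)⁻¹ ^ 2 * ∑ i, (a i : K) * x i ^ 2 := by
    rw [mul_sum]; exact sum_congr rfl fun i _ => by ring
  dsimp only
  rw [hscale, map_mul, map_pow, map_inv₀]
  calc (v (x i₀))⁻¹ ^ 2 * v (∑ i, (a i : K) * x i ^ 2) < (v (x i₀))⁻¹ ^ 2 * v (x i₀) ^ 2 := by
        gcongr; exact zero_lt_iff.2 (pow_ne_zero _ (inv_ne_zero hx₀))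
    _ = 1 := by rw [← mul_pow, inv_mul_cancel₀ hx₀, one_pow]

lemma eq_zero_of_sup_valuation_eq_zero {x : Fin n → K} (h : (univ.sup fun i => v (x i)) = 0) :
    x = 0 :=
  funext fun i => v.zero_iff.1 (le_zero_iff.1 (h ▸ le_sup (f := fun i => v (x i)) (mem_univ i)))

end ResidueForm

open Finset in
theorem stmt0_general {K : Type*} [Field K] {Γ₀ : Type*} [LinearOrderedCommGroupWithZero Γ₀]
    (v : Valuation K Γ₀)
    {k : Type*} [Field k]
    (π : v.integer →+* k)
    (hker : ∀ x : v.integer, π x = 0 ↔ v (x : K) < 1)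
    (t : K) (ht : ¬ ∃ s : Γ₀, v t = s * s)
    {n m : ℕ} (a : Fin n → v.integer) (b : Fin m → v.integer)
    (hiso : ∃ (x : Fin n → K) (y : Fin m → K), (x ≠ 0 ∨ y ≠ 0) ∧
      ∑ i, (a i : K) * x i ^ 2 + ∑ j, t * (b j : K) * y j ^ 2 = 0) :
    (∃ x : Fin n → k, x ≠ 0 ∧ ∑ i, π (a i) * x i ^ 2 = 0) ∨
    (∃ y : Fin m → k, y ≠ 0 ∧ ∑ j, π (b j) * y j ^ 2 = 0) := by
  obtain ⟨x, y, hxy, heq⟩ := hiso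
  have hval : v (∑ i, (a i : K) * x i ^ 2) = v t * v (∑ j, (b j : K) * y j ^ 2) := by
    rw [← map_mul, mul_sum, eq_neg_of_add_eq_zero_left heq, Valuation.map_neg]
    simp only [mul_assoc]
  have hA := valuation_sum_mul_sq_le_sup_sq v a x
  have hB := valuation_sum_mul_sq_le_sup_sq v b y
  rcases lt_trichotomy ((univ.sup fun i => v (x i)) ^ 2) (v t * (univ.sup fun j => v (y j)) ^ 2)
    with h | h | h
  · exact .inr <| exists_residue_isotropic_of_valuation_lt_sup_sq v π hker b y <|
      lt_of_mul_lt_mul_left' (hval ▸ hA.trans_lt h)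
  · obtain ⟨hx, hy⟩ := eq_zero_of_sq_eq_mul_sq ht h
    exact (hxy.elim (· (eq_zero_of_sup_valuation_eq_zero v hx))
      (· (eq_zero_of_sup_valuation_eq_zero v hy))).elim
  · exact .inl <| exists_residue_isotropic_of_valuation_lt_sup_sq v π hker a x <|
      (hval ▸ mul_le_mul_right hB (v t)).trans_lt h

open Finset in
/-- Residues of quadratic forms: if `K` carries a valuation `v` with value group `Γ₀`
(`v` surjective) and residue field `k` of characteristic `≠ 2` (residue map `π` on the
valuation ring, with kernel the maximal ideal), `t ∈ K` has odd valuation, and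
`Q₁ = ⟨a₁,…,aₙ⟩`, `Q₂ = ⟨b₁,…,b_m⟩` have unit coefficients, then isotropy of
`Q₁ ⊥ (⟨t⟩ ⊗ Q₂)` over `K` forces the residue form of `Q₁` or `Q₂` to be isotropic
over `k`. -/
theorem stmt0 {K : Type*} [Field K] {Γ₀ : Type*} [LinearOrderedCommGroupWithZero Γ₀]
    (v : Valuation K Γ₀) (hv : Function.Surjective v)
    {k : Type*} [Field k] (hk2 : (2 : k) ≠ 0)
    (π : v.integer →+* k) (hπ : Function.Surjective π)
    (hker : ∀ x : v.integer, π x = 0 ↔ v (x : K) < 1)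
    (t : K) (ht : ¬ ∃ s : Γ₀, v t = s * s)
    {n m : ℕ} (a : Fin n → v.integer) (b : Fin m → v.integer)
    (ha : ∀ i, v ((a i : K)) = 1) (hb : ∀ j, v ((b j : K)) = 1)
    (hiso : ∃ (x : Fin n → K) (y : Fin m → K), (x ≠ 0 ∨ y ≠ 0) ∧
      ∑ i, (a i : K) * x i ^ 2 + ∑ j, t * (b j : K) * y j ^ 2 = 0) :
    (∃ x : Fin n → k, x ≠ 0 ∧ ∑ i, π (a i) * x i ^ 2 = 0) ∨
    (∃ y : Fin m → k, y ≠ 0 ∧ ∑ j, π (b j) * y j ^ 2 = 0) :=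
  stmt0_general v π hker t ht a b hiso
end

section
/- Let K be a field with a valuation v with value group Γ and residue field k of characteristic ≠ 2, and let t ∈ K have odd valuation (v(t) ∉ 2Γ). Let Q = ⟨a₁,…,aₙ⟩ be a quadratic form over K with all aᵢ of valuation 0. If ⟨1,t⟩ ⊗ Q is isotropic over K, then the residue form of Q is isotropic over k. -/
/-!
If the residue form `⟨ā₁,…,āₙ⟩` is anisotropic, then for every `x ≠ 0` the value
`Q(x) = ∑ aᵢ xᵢ²` has valuation `(maxᵢ v(xᵢ))²`: dividing by the coordinate `x_j` of largest
valuation gives an integral vector whose reduction is nonzero, so the reduction of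
`Q(x) / x_j²` is nonzero. Hence `Q` is anisotropic over `K` and `v(Q(x))` is always a square.
A nontrivial zero of `Q(x) + t Q(y)` then forces `y ≠ 0` and `v(t) = v(-Q(x)) / v(Q(y))`,
a square.
-/

open Finset

namespace Valuation

variable {K Γ₀ k ι : Type*} [Field K] [LinearOrderedCommGroupWithZero Γ₀] {v : Valuation K Γ₀}
  [Semiring k]

theorem map_eq_one_of_residue_ne_zero (π : v.integer →+* k)
    (hπ : ∀ x : v.integer, v (x : K) < 1 → π x = 0) {A : v.integer} (hA : π A ≠ 0) :
    v (A : K) = 1 :=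
  le_antisymm A.2 (not_lt.1 fun h => hA (hπ A h))

variable [Nontrivial k] [Fintype ι]

theorem map_diagSum_eq_of_forall_le (π : v.integer →+* k)
    (hπ : ∀ x : v.integer, v (x : K) < 1 → π x = 0) (a : ι → v.integer)
    (haniso : ∀ z : ι → k, z ≠ 0 → ∑ i, π (a i) * z i ^ 2 ≠ 0)
    {x : ι → K} {j : ι} (hxj : x j ≠ 0) (hmax : ∀ i, v (x i) ≤ v (x j)) :
    v (∑ i, (a i : K) * x i ^ 2) = v (x j) ^ 2 := by
  have hU : ∀ i, x i / x j ∈ v.integer := fun i => by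
    rw [mem_integer_iff, map_div₀]
    exact div_le_one_of_le₀ (hmax i) zero_le
  set U : ι → v.integer := fun i => ⟨x i / x j, hU i⟩
  have hUj : π (U j) = 1 := by
    rw [show U j = 1 from Subtype.ext (div_self hxj), map_one]
  have hres : π (∑ i, a i * U i ^ 2) ≠ 0 := by
    simpa only [map_sum, map_mul, map_pow] using
      haniso (fun i => π (U i)) fun h => one_ne_zero (hUj.symm.trans (congrFun h j))
  have hfactor : ∑ i, (a i : K) * x i ^ 2 = x j ^ 2 * ((∑ i, a i * U i ^ 2 : v.integer) : K) := by
    push_cast [U, mul_sum]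
    refine sum_congr rfl fun i _ => ?_
    field_simp
  rw [hfactor, map_mul, map_eq_one_of_residue_ne_zero π hπ hres, mul_one, map_pow]

theorem diagSum_ne_zero_of_residue_anisotropic (π : v.integer →+* k)
    (hπ : ∀ x : v.integer, v (x : K) < 1 → π x = 0) (a : ι → v.integer)
    (haniso : ∀ z : ι → k, z ≠ 0 → ∑ i, π (a i) * z i ^ 2 ≠ 0)
    {x : ι → K} (hx : x ≠ 0) : ∑ i, (a i : K) * x i ^ 2 ≠ 0 := by
  obtain ⟨i₀, hi₀⟩ := Function.ne_iff.1 hx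
  obtain ⟨j, -, hmax⟩ := exists_max_image univ (fun i => v (x i)) ⟨i₀, mem_univ i₀⟩
  have hxj : x j ≠ 0 := v.ne_zero_iff.1 <|
    ((zero_lt_iff.2 (v.ne_zero_iff.2 hi₀)).trans_le (hmax i₀ (mem_univ i₀))).ne'
  rw [← v.ne_zero_iff, map_diagSum_eq_of_forall_le π hπ a haniso hxj
    fun i => hmax i (mem_univ i)]
  exact pow_ne_zero 2 (v.ne_zero_iff.2 hxj)

theorem isSquare_map_diagSum (π : v.integer →+* k)
    (hπ : ∀ x : v.integer, v (x : K) < 1 → π x = 0) (a : ι → v.integer)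
    (haniso : ∀ z : ι → k, z ≠ 0 → ∑ i, π (a i) * z i ^ 2 ≠ 0) (x : ι → K) :
    IsSquare (v (∑ i, (a i : K) * x i ^ 2)) := by
  cases isEmpty_or_nonempty ι
  · simp
  obtain ⟨j, -, hmax⟩ := exists_max_image univ (fun i => v (x i)) univ_nonempty
  by_cases hxj : x j = 0
  · have hx : x = 0 := funext fun i => v.zero_iff.1 <| le_antisymm
      ((hmax i (mem_univ i)).trans_eq (by rw [hxj, map_zero])) zero_le
    simp [hx]
  rw [map_diagSum_eq_of_forall_le π hπ a haniso hxj fun i => hmax i (mem_univ i)]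
  exact IsSquare.sq _

end Valuation

theorem stmt1_general {K : Type*} [Field K] {Γ₀ : Type*} [LinearOrderedCommGroupWithZero Γ₀]
    (v : Valuation K Γ₀)
    {k : Type*} [Field k]
    (π : v.integer →+* k)
    (hker : ∀ x : v.integer, π x = 0 ↔ v (x : K) < 1)
    (t : K) (ht : ¬ ∃ s : Γ₀, v t = s * s)
    {n : ℕ} (a : Fin n → v.integer)
    (hiso : ∃ (x y : Fin n → K), (x ≠ 0 ∨ y ≠ 0) ∧
      ∑ i, (a i : K) * x i ^ 2 + ∑ i, t * (a i : K) * y i ^ 2 = 0) :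
    ∃ x : Fin n → k, x ≠ 0 ∧ ∑ i, π (a i) * x i ^ 2 = 0 := by
  by_contra! haniso
  have hπ : ∀ x : v.integer, v (x : K) < 1 → π x = 0 := fun x => (hker x).2
  obtain ⟨x, y, hxy, heq⟩ := hiso
  simp only [mul_assoc, ← mul_sum] at heq
  set Qx := ∑ i, (a i : K) * x i ^ 2
  set Qy := ∑ i, (a i : K) * y i ^ 2
  have hQ_ne_zero {z : Fin n → K} (hz : z ≠ 0) : ∑ i, (a i : K) * z i ^ 2 ≠ 0 :=
    Valuation.diagSum_ne_zero_of_residue_anisotropic π hπ a haniso hz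
  have hy : y ≠ 0 := fun hy =>
    hQ_ne_zero (hxy.resolve_right (not_not.2 hy)) (by simpa [Qy, hy] using heq)
  have hQy : Qy ≠ 0 := hQ_ne_zero hy
  have ht_eq : t = -Qx / Qy := by
    rw [eq_div_iff hQy]
    linear_combination heq
  refine ht ?_
  rw [ht_eq, map_div₀, Valuation.map_neg]
  exact (Valuation.isSquare_map_diagSum π hπ a haniso x).div
    (Valuation.isSquare_map_diagSum π hπ a haniso y)

/-- If `K` carries a valuation `v` with value group `Γ₀` (`v` surjective) and residue
field `k` of characteristic `≠ 2` (residue map `π`), `t ∈ K` has odd valuation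
(`v t ∉ 2Γ`), and `Q = ⟨a₁,…,aₙ⟩` has unit coefficients, then isotropy of
`⟨1,t⟩ ⊗ Q = ⟨a₁,…,aₙ,ta₁,…,taₙ⟩` over `K` implies that the residue form of `Q`
is isotropic over `k`. -/
theorem stmt1 {K : Type*} [Field K] {Γ₀ : Type*} [LinearOrderedCommGroupWithZero Γ₀]
    (v : Valuation K Γ₀) (hv : Function.Surjective v)
    {k : Type*} [Field k] (hk2 : (2 : k) ≠ 0)
    (π : v.integer →+* k) (hπ : Function.Surjective π)
    (hker : ∀ x : v.integer, π x = 0 ↔ v (x : K) < 1)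
    (t : K) (ht : ¬ ∃ s : Γ₀, v t = s * s)
    {n : ℕ} (a : Fin n → v.integer) (ha : ∀ i, v ((a i : K)) = 1)
    (hiso : ∃ (x y : Fin n → K), (x ≠ 0 ∨ y ≠ 0) ∧
      ∑ i, (a i : K) * x i ^ 2 + ∑ i, t * (a i : K) * y i ^ 2 = 0) :
    ∃ x : Fin n → k, x ≠ 0 ∧ ∑ i, π (a i) * x i ^ 2 = 0 :=
  stmt1_general v π hker t ht a hiso
end

section
/- Let K be a henselian valued field with residue field k of characteristic ≠ 2, t ∈ K of odd valuation, and Q = ⟨a₁,…,aₙ⟩ with all aᵢ units of the valuation ring. If the residue form of Q is isotropic over k, then ⟨1,t⟩ ⊗ Q is isotropic over K. -/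
/-!
A nonzero isotropic vector `x` of the residue form already lifts to an isotropic vector of `Q`
over `K`: lift all coordinates arbitrarily except one with `x j ≠ 0`, and solve for that one.
It is a simple root of `a_j X² + s` modulo the maximal ideal, because `2 a_j x_j ≠ 0` in `k`,
so Hensel's lemma lifts it. Then `(x, 0)` is an isotropic vector of `⟨1, t⟩ ⊗ Q = Q ⊥ tQ`.
-/

open Polynomial

def HenselianResidueMap {R k : Type*} [CommRing R] [Field k] (π : R →+* k) : Prop :=
  ∀ (P : R[X]) (α : k), (P.map π).eval α = 0 → (derivative (P.map π)).eval α ≠ 0 →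
    ∃ β : R, π β = α ∧ P.eval β = 0

namespace HenselianResidueMap

variable {R k : Type*} [CommRing R] [Field k] {π : R →+* k}

theorem exists_lift_root_mul_sq_add (hR : HenselianResidueMap π) (hk2 : (2 : k) ≠ 0)
    {u s : R} (hu : π u ≠ 0) {α : k} (hα : α ≠ 0) (hroot : π u * α ^ 2 + π s = 0) :
    ∃ β : R, π β = α ∧ u * β ^ 2 + s = 0 := by
  have hmap : (C u * X ^ 2 + C s).map π = C (π u) * X ^ 2 + C (π s) := by simp
  obtain ⟨β, hβ, hPβ⟩ := hR (C u * X ^ 2 + C s) α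
    (by simpa [hmap] using hroot)
    (by simpa [hmap, derivative_X_pow, mul_assoc, one_add_one_eq_two] using
      mul_ne_zero hu (mul_ne_zero hk2 hα))
  exact ⟨β, hβ, by simpa using hPβ⟩

theorem exists_lift_of_isotropic (hR : HenselianResidueMap π)
    (hπ : Function.Surjective π) (hk2 : (2 : k) ≠ 0) {ι : Type*} [Fintype ι] [DecidableEq ι]
    {a : ι → R} {x : ι → k} (hx : ∑ i, π (a i) * x i ^ 2 = 0) {j : ι} (hj : x j ≠ 0)
    (haj : π (a j) ≠ 0) :
    ∃ z : ι → R, (∀ i, π (z i) = x i) ∧ ∑ i, a i * z i ^ 2 = 0 := by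
  choose c hc using fun i => hπ (x i)
  set s := ∑ i ∈ {j}ᶜ, a i * c i ^ 2
  have hroot : π (a j) * x j ^ 2 + π s = 0 := by
    rw [Fintype.sum_eq_add_sum_compl j] at hx
    simpa [s, map_sum, hc] using hx
  obtain ⟨β, hβ, hβroot⟩ := hR.exists_lift_root_mul_sq_add hk2 haj hj hroot
  refine ⟨Function.update c j β, fun i => ?_, ?_⟩
  · rcases eq_or_ne i j with rfl | hij
    · simpa using hβ
    · simp [Function.update_of_ne hij, hc]
  · rw [Fintype.sum_eq_add_sum_compl j, Function.update_self]
    convert hβroot using 2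
    refine Finset.sum_congr rfl fun i hi => ?_
    rw [Function.update_of_ne (Finset.mem_compl.mp hi ∘ Finset.mem_singleton.mpr)]

end HenselianResidueMap

theorem stmt2_general {K : Type*} [Field K] {Γ₀ : Type*} [LinearOrderedCommGroupWithZero Γ₀]
    (v : Valuation K Γ₀)
    {k : Type*} [Field k] (hk2 : (2 : k) ≠ 0)
    (π : v.integer →+* k) (hπ : Function.Surjective π)
    (hhens : ∀ (P : Polynomial v.integer) (α : k),
      (P.map π).eval α = 0 → (Polynomial.derivative (P.map π)).eval α ≠ 0 →
      ∃ β : v.integer, π β = α ∧ P.eval β = 0)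
    (t : K)
    {n : ℕ} (a : Fin n → v.integer) (ha : ∀ i, v ((a i : K)) = 1)
    (hres : ∃ x : Fin n → k, x ≠ 0 ∧ ∑ i, π (a i) * x i ^ 2 = 0) :
    ∃ (x y : Fin n → K), (x ≠ 0 ∨ y ≠ 0) ∧
      ∑ i, (a i : K) * x i ^ 2 + ∑ i, t * (a i : K) * y i ^ 2 = 0 := by
  obtain ⟨x, hx0, hx⟩ := hres
  obtain ⟨j, hj⟩ := Function.ne_iff.mp hx0
  have haj : IsUnit (a j) := (Valuation.integer.integers v).isUnit_of_one
    (isUnit_iff_ne_zero.mpr (v.ne_zero_iff.mp ((ha j).trans_ne one_ne_zero))) (ha j)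
  obtain ⟨z, hz, hzsum⟩ := HenselianResidueMap.exists_lift_of_isotropic hhens hπ hk2 hx hj
    (haj.map π).ne_zero
  refine ⟨fun i => z i, 0, Or.inl fun h => hj ?_, ?_⟩
  · rw [← hz j, show z j = 0 by simpa using congrFun h j, map_zero, Pi.zero_apply]
  · simpa using congrArg ((↑) : v.integer → K) hzsum

/-- Converse for henselian fields: if `K` is a henselian valued field (Hensel's Lemma
holds: a simple root in the residue field `k` of a polynomial over the valuation ring
lifts), the residue field has characteristic `≠ 2`, `t ∈ K` has odd valuation, and
`Q = ⟨a₁,…,aₙ⟩` has unit coefficients whose residue form is isotropic over `k`,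
then `⟨1,t⟩ ⊗ Q` is isotropic over `K`. -/
theorem stmt2 {K : Type*} [Field K] {Γ₀ : Type*} [LinearOrderedCommGroupWithZero Γ₀]
    (v : Valuation K Γ₀) (hv : Function.Surjective v)
    {k : Type*} [Field k] (hk2 : (2 : k) ≠ 0)
    (π : v.integer →+* k) (hπ : Function.Surjective π)
    (hker : ∀ x : v.integer, π x = 0 ↔ v (x : K) < 1)
    (hhens : ∀ (P : Polynomial v.integer) (α : k),
      (P.map π).eval α = 0 → (Polynomial.derivative (P.map π)).eval α ≠ 0 →
      ∃ β : v.integer, π β = α ∧ P.eval β = 0)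
    (t : K) (ht : ¬ ∃ s : Γ₀, v t = s * s)
    {n : ℕ} (a : Fin n → v.integer) (ha : ∀ i, v ((a i : K)) = 1)
    (hres : ∃ x : Fin n → k, x ≠ 0 ∧ ∑ i, π (a i) * x i ^ 2 = 0) :
    ∃ (x y : Fin n → K), (x ≠ 0 ∨ y ≠ 0) ∧
      ∑ i, (a i : K) * x i ^ 2 + ∑ i, t * (a i : K) * y i ^ 2 = 0 :=
  stmt2_general v hk2 π hπ hhens t a ha hres
end

section
/- Let K be a henselian valued field such that both K and its residue field k have characteristic zero. Then the valuation ring O contains a subfield F that is maximal among subfields of O, and the residue map π: O → k restricts to an isomorphism from F onto k. -/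
/-!
By Zorn's lemma there is a subfield `F` of `K` maximal among those contained in `O`; the prime
field `ℚ` is one of them, since `v` is trivial on it when `k` has characteristic zero. Being a
field, `F` maps injectively to `k`. For surjectivity take `α ∈ k`. If `α` is transcendental over
`π(F)`, then for any lift `a` every nonzero `p(a)` with `p ∈ F[X]` has nonzero residue `p(α)`,
hence is a unit of `O`, so `F(a) ⊆ O` and maximality gives `a ∈ F`. If `α` is algebraic, its
minimal polynomial over `π(F) ≅ F` is separable (characteristic zero), so Hensel's lemma lifts
`α` to a root `β ∈ O` of a polynomial over `F`; then `F(β) = F[β] ⊆ O` and again `β ∈ F`.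
-/

open Polynomial

namespace Valuation

variable {K : Type*} [Field K] {Γ₀ : Type*} [LinearOrderedCommGroupWithZero Γ₀]

theorem subfieldClosure_subset_integer (v : Valuation K Γ₀) {A : Subring K}
    (hA : ∀ a ∈ A, a ≠ 0 → v a = 1) :
    ∀ x ∈ Subfield.closure (A : Set K), x ∈ v.integer := by
  intro x hx
  obtain ⟨a, ha, b, hb, rfl⟩ := Subfield.mem_closure_iff.mp hx
  rw [Subring.closure_eq] at ha hb
  have hva : v a ≤ 1 := by
    rcases eq_or_ne a 0 with rfl | ha0
    · simp
    · exact (hA a ha ha0).le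
  rcases eq_or_ne b 0 with rfl | hb0
  · simp
  · rwa [mem_integer_iff, map_div₀, hA b hb hb0, div_one]

theorem exists_maximal_subfield_subset_integer (v : Valuation K Γ₀)
    (hbot : ∀ x ∈ (⊥ : Subfield K), x ∈ v.integer) :
    ∃ F : Subfield K, Maximal (fun F : Subfield K => ∀ x ∈ F, x ∈ v.integer) F := by
  obtain ⟨F, -, hF⟩ := zorn_le_nonempty₀ {F : Subfield K | ∀ x ∈ F, x ∈ v.integer}
    (fun c hc hchain G hG => ⟨sSup c, fun x hx => by
      obtain ⟨H, hH, hxH⟩ :=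
        (Subfield.mem_sSup_of_directedOn ⟨G, hG⟩ hchain.directedOn).mp hx
      exact hc hH x hxH, fun _ => le_sSup⟩) ⊥ hbot
  exact ⟨F, hF⟩

variable {v : Valuation K Γ₀} {k : Type*} [Field k] {π : v.integer →+* k}

theorem valuation_eq_one_of_residue_ne_zero (hker : ∀ x : v.integer, π x = 0 ↔ v (x : K) < 1)
    {x : v.integer} (hx : π x ≠ 0) : v (x : K) = 1 :=
  le_antisymm x.2 (not_lt.mp fun h => hx ((hker x).mpr h))

theorem bot_subset_integer [CharZero k] (hker : ∀ x : v.integer, π x = 0 ↔ v (x : K) < 1) :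
    ∀ x ∈ (⊥ : Subfield K), x ∈ v.integer := by
  refine fun x hx =>
    v.subfieldClosure_subset_integer (A := ⊥) ?_ x ((bot_le : ⊥ ≤ Subfield.closure _) hx)
  rintro _ ⟨n, rfl⟩ hn
  have hn' : n ≠ 0 := by rintro rfl; simp at hn
  have hπn : π (n : v.integer) ≠ 0 := by rwa [map_intCast, Int.cast_ne_zero]
  simpa using valuation_eq_one_of_residue_ne_zero hker hπn

variable (v) in
def subfieldInclusion (F : Subfield K) (hF : ∀ x ∈ F, x ∈ v.integer) : F →+* v.integer :=
  F.subtype.codRestrict v.integer fun x => hF x x.2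

theorem exists_eq_eval₂_of_mem_adjoin {F : Subfield K} (hF : ∀ x ∈ F, x ∈ v.integer)
    (b : v.integer) {x : K} (hx : x ∈ Algebra.adjoin F {(b : K)}) :
    ∃ p : F[X], x = ((eval₂ (subfieldInclusion v F hF) b p : v.integer) : K) := by
  rw [Algebra.adjoin_singleton_eq_range_aeval] at hx
  obtain ⟨p, rfl⟩ := hx
  exact ⟨p, (hom_eval₂ p (subfieldInclusion v F hF) v.integer.subtype b).symm⟩

theorem mem_of_isIntegral_of_maximal {F : Subfield K}
    (hmax : Maximal (fun F : Subfield K => ∀ x ∈ F, x ∈ v.integer) F)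
    (b : v.integer) (hb : IsIntegral F (b : K)) : (b : K) ∈ F := by
  let L := IntermediateField.adjoin F {(b : K)}
  have hL : ∀ x ∈ L.toSubfield, x ∈ v.integer := by
    intro x hx
    have hx' : x ∈ Algebra.adjoin F {(b : K)} := by
      rw [← IntermediateField.adjoin_simple_toSubalgebra_of_isAlgebraic hb.isAlgebraic]
      exact hx
    obtain ⟨p, rfl⟩ := exists_eq_eval₂_of_mem_adjoin hmax.prop b hx'
    exact Subtype.coe_prop _
  exact hmax.2 hL (fun x hx => L.algebraMap_mem ⟨x, hx⟩)
    (IntermediateField.mem_adjoin_simple_self F (b : K))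

theorem mem_of_residue_transcendental_of_maximal
    (hker : ∀ x : v.integer, π x = 0 ↔ v (x : K) < 1) {F : Subfield K}
    (hmax : Maximal (fun F : Subfield K => ∀ x ∈ F, x ∈ v.integer) F) (b : v.integer)
    (hb : ∀ p : F[X], p ≠ 0 →
      eval₂ (π.comp (subfieldInclusion v F hmax.prop)) (π b) p ≠ 0) :
    (b : K) ∈ F := by
  let A := (Algebra.adjoin F {(b : K)}).toSubring
  have hA : ∀ a ∈ A, a ≠ 0 → v a = 1 := by
    intro a ha ha0
    obtain ⟨p, rfl⟩ := exists_eq_eval₂_of_mem_adjoin hmax.prop b ha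
    have hp : p ≠ 0 := by rintro rfl; simp at ha0
    refine valuation_eq_one_of_residue_ne_zero hker ?_
    rw [hom_eval₂]
    exact hb p hp
  have hFA : F ≤ Subfield.closure (A : Set K) := fun x hx =>
    Subfield.subset_closure ((Algebra.adjoin F _).algebraMap_mem ⟨x, hx⟩)
  exact hmax.2 (v.subfieldClosure_subset_integer hA) hFA
    (Subfield.subset_closure (Algebra.subset_adjoin rfl))

theorem exists_isIntegral_lift [CharZero k]
    (hhens : ∀ (P : Polynomial v.integer) (α : k),
      (P.map π).eval α = 0 → (Polynomial.derivative (P.map π)).eval α ≠ 0 →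
      ∃ β : v.integer, π β = α ∧ P.eval β = 0)
    {F : Subfield K} (hF : ∀ x ∈ F, x ∈ v.integer) {α : k}
    (hα : ∃ p : F[X], p ≠ 0 ∧ eval₂ (π.comp (subfieldInclusion v F hF)) α p = 0) :
    ∃ β : v.integer, π β = α ∧ IsIntegral F (β : K) := by
  set ι := subfieldInclusion v F hF
  let _ : Algebra F k := (π.comp ι).toAlgebra
  have : CharZero F := (π.comp ι).charZero
  have hαint : IsIntegral F α := (show IsAlgebraic F α from hα).isIntegral
  set μ := minpoly F α
  have hμ : aeval α μ = 0 := minpoly.aeval F α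
  have hμ' : aeval α (derivative μ) ≠ 0 :=
    (minpoly.irreducible hαint).separable.aeval_derivative_ne_zero hμ
  have hmap : (μ.map ι).map π = μ.map (algebraMap F k) := by rw [map_map]; rfl
  obtain ⟨β, hβα, hβ⟩ := hhens (μ.map ι) α (by rwa [hmap, eval_map, ← aeval_def])
    (by rwa [hmap, derivative_map, eval_map, ← aeval_def])
  refine ⟨β, hβα, μ, minpoly.monic hαint, ?_⟩
  rw [eval_map] at hβ
  have hβK := congrArg v.integer.subtype hβ
  rw [hom_eval₂, map_zero] at hβK
  exact hβK

theorem residue_surjective_of_maximal [CharZero k] (hπ : Function.Surjective π)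
    (hker : ∀ x : v.integer, π x = 0 ↔ v (x : K) < 1)
    (hhens : ∀ (P : Polynomial v.integer) (α : k),
      (P.map π).eval α = 0 → (Polynomial.derivative (P.map π)).eval α ≠ 0 →
      ∃ β : v.integer, π β = α ∧ P.eval β = 0)
    {F : Subfield K} (hmax : Maximal (fun F : Subfield K => ∀ x ∈ F, x ∈ v.integer) F) :
    Function.Surjective (π.comp (subfieldInclusion v F hmax.prop)) := by
  intro α
  by_cases halg :
    ∃ p : F[X], p ≠ 0 ∧ eval₂ (π.comp (subfieldInclusion v F hmax.prop)) α p = 0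
  · obtain ⟨β, rfl, hβ⟩ := exists_isIntegral_lift hhens hmax.prop halg
    exact ⟨⟨β, mem_of_isIntegral_of_maximal hmax β hβ⟩, rfl⟩
  · push Not at halg
    obtain ⟨b, rfl⟩ := hπ α
    exact ⟨⟨b, mem_of_residue_transcendental_of_maximal hker hmax b halg⟩, rfl⟩

end Valuation

theorem stmt3_general {K : Type*} [Field K]
    {Γ₀ : Type*} [LinearOrderedCommGroupWithZero Γ₀]
    (v : Valuation K Γ₀)
    {k : Type*} [Field k] [CharZero k]
    (π : v.integer →+* k) (hπ : Function.Surjective π)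
    (hker : ∀ x : v.integer, π x = 0 ↔ v (x : K) < 1)
    (hhens : ∀ (P : Polynomial v.integer) (α : k),
      (P.map π).eval α = 0 → (Polynomial.derivative (P.map π)).eval α ≠ 0 →
      ∃ β : v.integer, π β = α ∧ P.eval β = 0) :
    ∃ (F : Subfield K) (hF : ∀ x ∈ F, x ∈ v.integer),
      (∀ F' : Subfield K, (∀ x ∈ F', x ∈ v.integer) → F ≤ F' → F' = F) ∧
      Function.Bijective (fun x : F => π ⟨(x : K), hF x x.2⟩) := by
  obtain ⟨F, hmax⟩ :=
    v.exists_maximal_subfield_subset_integer (Valuation.bot_subset_integer hker)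
  exact ⟨F, hmax.prop, fun F' hF' hle => (hmax.eq_of_le hF' hle).symm,
    (π.comp (v.subfieldInclusion F hmax.prop)).injective,
    Valuation.residue_surjective_of_maximal hπ hker hhens hmax⟩

/-- If `K` is a henselian valued field and both `K` and its residue field `k`
have characteristic zero, then the valuation ring contains a subfield `F` maximal
among subfields of the valuation ring, and the residue map `π` restricts to an
isomorphism (a bijective ring map) from `F` onto `k`. -/
theorem stmt3 {K : Type*} [Field K] [CharZero K]
    {Γ₀ : Type*} [LinearOrderedCommGroupWithZero Γ₀]
    (v : Valuation K Γ₀) (hv : Function.Surjective v)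
    {k : Type*} [Field k] [CharZero k]
    (π : v.integer →+* k) (hπ : Function.Surjective π)
    (hker : ∀ x : v.integer, π x = 0 ↔ v (x : K) < 1)
    (hhens : ∀ (P : Polynomial v.integer) (α : k),
      (P.map π).eval α = 0 → (Polynomial.derivative (P.map π)).eval α ≠ 0 →
      ∃ β : v.integer, π β = α ∧ P.eval β = 0) :
    ∃ (F : Subfield K) (hF : ∀ x ∈ F, x ∈ v.integer),
      (∀ F' : Subfield K, (∀ x ∈ F', x ∈ v.integer) → F ≤ F' → F' = F) ∧
      Function.Bijective (fun x : F => π ⟨(x : K), hF x x.2⟩) :=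
  stmt3_general v π hπ hker hhens
end

section
/- Let K be a valued field such that both K and its residue field k have characteristic zero. Then the valuation ring O contains a maximal subfield F, the residue map π embeds F into k, and k is algebraic over π(F). -/
/-- If `K` is a valued field and both `K` and its residue field `k` have characteristic
zero, then the valuation ring contains a maximal subfield `F`, the residue map `π`
embeds `F` into `k`, and `k` is algebraic over the image `π(F)`. -/
theorem stmt4 {K : Type*} [Field K] [CharZero K]
    {Γ₀ : Type*} [LinearOrderedCommGroupWithZero Γ₀]
    (v : Valuation K Γ₀) (hv : Function.Surjective v)
    {k : Type*} [Field k] [CharZero k]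
    (π : v.integer →+* k) (hπ : Function.Surjective π)
    (hker : ∀ x : v.integer, π x = 0 ↔ v (x : K) < 1) :
    ∃ (F : Subfield K) (hF : ∀ x ∈ F, x ∈ v.integer),
      (∀ F' : Subfield K, (∀ x ∈ F', x ∈ v.integer) → F ≤ F' → F' = F) ∧
      Function.Injective (fun x : F => π ⟨(x : K), hF x x.2⟩) ∧
      (∀ z : k, ∃ p : Polynomial k, p ≠ 0 ∧
        (∀ i : ℕ, p.coeff i ∈ Set.range (fun x : F => π ⟨(x : K), hF x x.2⟩)) ∧
        Polynomial.eval z p = 0) := by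
  classical
  -- key: a subfield whose generating subring has units of valuation 1 sits inside `O`
  have ratio : ∀ s : Set K,
      (∀ b ∈ Subring.closure s, b ∈ v.integer ∧ (b ≠ 0 → v b = 1)) →
      ∀ y ∈ Subfield.closure s, y ∈ v.integer := by
    intro s hs y hy
    rw [Subfield.mem_closure_iff] at hy
    obtain ⟨a, ha, b, hb, rfl⟩ := hy
    by_cases hb0 : b = 0
    · simp [hb0, Valuation.mem_integer_iff]
    · rw [Valuation.mem_integer_iff, map_div₀, (hs b hb).2 hb0, div_one]
      exact (hs a ha).1
  -- nonzero integers have valuation 1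
  have hint : ∀ n : ℤ, ((n : K) ∈ v.integer) ∧ ((n : K) ≠ 0 → v (n : K) = 1) := by
    intro n
    have hmem : (n : K) ∈ v.integer := by
      have : ((n : v.integer) : K) = (n : K) := by push_cast; ring
      exact this ▸ (n : v.integer).2
    refine ⟨hmem, fun hn0 => ?_⟩
    have hn : n ≠ 0 := by exact_mod_cast hn0
    have hne : π (n : v.integer) ≠ 0 := by
      rw [map_intCast]
      exact_mod_cast hn
    have hnlt : ¬ v ((n : v.integer) : K) < 1 := fun h => hne ((hker _).2 h)
    have hle : v ((n : v.integer) : K) ≤ 1 := (n : v.integer).2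
    have : ((n : v.integer) : K) = (n : K) := by push_cast; ring
    rw [this] at hnlt hle
    exact le_antisymm hle (not_lt.1 hnlt)
  -- Zorn's lemma on subfields contained in the valuation ring
  set S : Set (Subfield K) := {F | ∀ x ∈ F, x ∈ v.integer} with hS
  have hbot : Subfield.closure (∅ : Set K) ∈ S := by
    intro x hx
    refine ratio ∅ ?_ x hx
    intro b hb
    rw [Subring.closure_empty, Subring.mem_bot] at hb
    obtain ⟨n, rfl⟩ := hb
    exact hint n
  obtain ⟨F, -, hFmax⟩ := zorn_le_nonempty₀ S (fun c hcS hc y hyc => by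
      refine ⟨sSup c, ?_, fun z hz => le_sSup hz⟩
      intro x hx
      rw [Subfield.mem_sSup_of_directedOn ⟨y, hyc⟩ hc.directedOn] at hx
      obtain ⟨F', hF'c, hxF'⟩ := hx
      exact hcS hF'c x hxF') _ hbot
  have hF : ∀ x ∈ F, x ∈ v.integer := hFmax.1
  have hmax : ∀ F' : Subfield K, (∀ x ∈ F', x ∈ v.integer) → F ≤ F' → F' = F :=
    fun F' h hle => hFmax.eq_of_ge h hle
  -- the ring homs
  let ψ : F →+* v.integer :=
    { toFun := fun a => ⟨a, hF _ a.2⟩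
      map_one' := rfl
      map_mul' := fun _ _ => rfl
      map_zero' := rfl
      map_add' := fun _ _ => rfl }
  let φ : F →+* k := π.comp ψ
  have hgφ : (fun x : F => π ⟨(x : K), hF x x.2⟩) = ⇑φ := rfl
  refine ⟨F, hF, hmax, by rw [hgφ]; exact φ.injective, ?_⟩
  intro z
  by_contra hcon
  push_neg at hcon
  obtain ⟨x, hxz⟩ := hπ z
  -- every element of the subring generated by F and x is an integer of valuation 1
  have key : ∀ b ∈ Subring.closure ((F : Set K) ∪ {(x : K)}),
      b ∈ v.integer ∧ (b ≠ 0 → v b = 1) := by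
    intro b hb
    have hsub : Subring.closure ((F : Set K) ∪ {(x : K)}) ≤
        (Algebra.adjoin F {(x : K)}).toSubring := by
      rw [Subring.closure_le]
      rintro y (hy | hy)
      · exact Subalgebra.algebraMap_mem _ (⟨y, hy⟩ : F)
      · exact Algebra.subset_adjoin hy
    have hbA : b ∈ Algebra.adjoin F {(x : K)} := hsub hb
    rw [Algebra.adjoin_singleton_eq_range_aeval, AlgHom.mem_range] at hbA
    obtain ⟨p, hp⟩ := hbA
    -- evaluate inside the valuation ring
    set B : v.integer := Polynomial.eval₂ ψ x p with hB
    have hBb : (B : K) = b := by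
      rw [← hp]
      show v.integer.subtype (Polynomial.eval₂ ψ x p) = _
      rw [Polynomial.hom_eval₂]
      have hcomp : v.integer.subtype.comp ψ = algebraMap F K := RingHom.ext fun a => rfl
      rw [hcomp, Polynomial.aeval_def]
      rfl
    have hπB : π B = Polynomial.eval z (p.map φ) := by
      rw [hB, Polynomial.hom_eval₂ p ψ π x, hxz, Polynomial.eval_map]
    refine ⟨hBb ▸ B.2, fun hb0 => ?_⟩
    have hp0 : p ≠ 0 := fun h => hb0 (by rw [← hp, h, map_zero])
    have hq0 : p.map φ ≠ 0 := Polynomial.map_ne_zero hp0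
    have hcoeff : ∀ i : ℕ, (p.map φ).coeff i ∈
        Set.range (fun x : F => π ⟨(x : K), hF x x.2⟩) := by
      intro i
      rw [Polynomial.coeff_map]
      exact ⟨p.coeff i, rfl⟩
    have := hcon (p.map φ) hq0 hcoeff
    have hπB0 : π B ≠ 0 := hπB ▸ this
    have hnlt : ¬ v (B : K) < 1 := fun h => hπB0 ((hker _).2 h)
    rw [hBb] at hnlt
    exact le_antisymm (hBb ▸ B.2) (not_lt.1 hnlt)
  -- hence the subfield generated by F and x is inside O, so equals F by maximality
  have hF' : Subfield.closure ((F : Set K) ∪ {(x : K)}) ∈ S :=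
    fun y hy => ratio _ key y hy
  have hle : F ≤ Subfield.closure ((F : Set K) ∪ {(x : K)}) :=
    fun y hy => Subfield.subset_closure (Or.inl hy)
  have heq := hmax _ hF' hle
  have hxF : (x : K) ∈ F := heq ▸ Subfield.subset_closure (Or.inr rfl)
  -- then z is in the image of F, hence algebraic: contradiction with hcon
  have hz : z = φ ⟨(x : K), hxF⟩ := by
    rw [← hxz]
    congr 1
  have : Polynomial.eval z ((Polynomial.X : Polynomial k) - Polynomial.C z) = 0 := by simp
  refine hcon (Polynomial.X - Polynomial.C z) (Polynomial.X_sub_C_ne_zero z) ?_ this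
  intro i
  rw [hgφ]
  match i with
  | 0 =>
    refine ⟨-⟨(x : K), hxF⟩, ?_⟩
    rw [map_neg, ← hz]
    simp
  | 1 => exact ⟨1, by simp⟩
  | (n + 2) => exact ⟨0, by rw [map_zero]; simp [Polynomial.coeff_X, Polynomial.coeff_C]⟩
end

section
/- Let a, b, c ∈ ℤ. Then ab = c if and only if there exists X = (x₁, x₂) ∈ ℤ × ℤ such that: (1,1) divides X, (-1,1) divides X - 2(b,0), and (2a+1, 1) divides X + 2(c,0), where for (α, β) ∈ ℤ × ℤ with α odd and β = 1 we say (α, 1) divides (γ, δ) iff γ = αδ (equivalently (γ,δ) is an integer multiple of (α,1)). -/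
/-- For `a, b, c ∈ ℤ`, `a * b = c` iff there exists `X ∈ ℤ × ℤ` with
`(1,1) ∣ X`, `(-1,1) ∣ X - 2(b,0)` and `(2a+1,1) ∣ X + 2(c,0)`,
where `(α,1) ∣ Y` means `Y = r • (α,1)` for some integer `r`. -/
theorem stmt7 (a b c : ℤ) :
    a * b = c ↔
      ∃ X : ℤ × ℤ,
        (∃ r : ℤ, X = r • ((1 : ℤ), (1 : ℤ))) ∧
        (∃ r : ℤ, X - (2 * b, 0) = r • ((-1 : ℤ), (1 : ℤ))) ∧
        (∃ r : ℤ, X + (2 * c, 0) = r • ((2 * a + 1 : ℤ), (1 : ℤ))) := by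
  constructor
  · rintro rfl
    refine ⟨(b, b), ⟨b, ?_⟩, ⟨b, ?_⟩, ⟨b, ?_⟩⟩ <;>
      simp only [Prod.smul_mk, smul_eq_mul, Prod.mk_sub_mk, Prod.mk_add_mk, Prod.mk.injEq] <;>
      constructor <;> ring
  · rintro ⟨X, ⟨r, rfl⟩, ⟨s, hs⟩, ⟨t, ht⟩⟩
    simp only [Prod.smul_mk, smul_eq_mul, Prod.mk_sub_mk, Prod.mk_add_mk, Prod.mk.injEq,
      mul_one] at hs ht
    obtain ⟨h1, h2⟩ := hs
    obtain ⟨h3, h4⟩ := ht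
    subst h2 h4
    have key : 2 * (a * b) = 2 * c := by linear_combination -h3 - a * h1
    omega
end
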